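/- For every δ ∈ [0,1), the value v_δ equals the concavification of f_δ := (1−δ)·u + δ·(v_δ ∘ M), i.e., v_δ(ξ) = (Cav f_δ)(ξ) for every ξ ∈ Δ(K), where (v_δ ∘ M)(ξ) := v_δ(ξM); in particular, v_δ is concave (hence continuous) on Δ(K). -/

import Mathlib

open scoped BigOperators

noncomputable section

/-- A row-stochastic matrix: nonnegative entries, rows summing to 1. -/
def IsStochastic {K : Type*} [Fintype K] (M : Matrix K K ℝ) : Prop :=
  (∀ i j, 0 ≤ M i j) ∧ ∀ i, ∑ j, M i j = 1

/-- A split of `ξ`: a countable family of weights `α` and beliefs `ξs` with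
`α s ≥ 0`, `ξs s ∈ Δ(K)`, `∑ α = 1` and `∑ α_s ξ_s = ξ`. -/
def IsSplit {K : Type*} [Fintype K] (ξ : K → ℝ) (α : ℕ → ℝ) (ξs : ℕ → K → ℝ) : Prop :=
  (∀ s, 0 ≤ α s) ∧ (∀ s, ξs s ∈ stdSimplex ℝ K) ∧ (∑' s, α s) = 1 ∧
    ∀ ℓ : K, (∑' s, α s * ξs s ℓ) = ξ ℓ

/-- The one-stage payoff of a split in the δ-discounted Bellman equation. -/
def splitPayoff {K : Type*} [Fintype K] (M : Matrix K K ℝ) (u : (K → ℝ) → ℝ) (δ : ℝ)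
    (w : (K → ℝ) → ℝ) (α : ℕ → ℝ) (ξs : ℕ → K → ℝ) : ℝ :=
  ∑' s, α s * ((1 - δ) * u (ξs s) + δ * w (Matrix.vecMul (ξs s) M))

/-- `v` is the family of δ-discounted values of the Markovian persuasion game:
for each `δ ∈ [0,1)`, `v δ` is bounded between `0` and `C = ‖u‖∞` on `Δ(K)` and
satisfies the Bellman equation there. -/
def IsValueFamily {K : Type*} [Fintype K] (M : Matrix K K ℝ) (u : (K → ℝ) → ℝ) (C : ℝ)
    (v : ℝ → (K → ℝ) → ℝ) : Prop :=
  ∀ δ ∈ Set.Ico (0 : ℝ) 1,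
    (∀ ξ ∈ stdSimplex ℝ K, 0 ≤ v δ ξ ∧ v δ ξ ≤ C) ∧
    ∀ ξ ∈ stdSimplex ℝ K,
      v δ ξ = sSup { r : ℝ | ∃ α ξs, IsSplit ξ α ξs ∧ r = splitPayoff M u δ (v δ) α ξs }

/-- The concavification of `g`: the smallest concave majorant of `g` on `Δ(K)`. -/
def cav {K : Type*} [Fintype K] (g : (K → ℝ) → ℝ) (ξ : K → ℝ) : ℝ :=
  sInf { y : ℝ | ∃ h : (K → ℝ) → ℝ, ConcaveOn ℝ (stdSimplex ℝ K) h ∧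
    (∀ p ∈ stdSimplex ℝ K, g p ≤ h p) ∧ y = h ξ }


/-!
By the Bellman equation, `v_δ ξ` is the supremum over splits of `ξ` of the expected stage payoff
`f_δ`. This supremum and `Cav f_δ` both equal the height of the upper boundary of the convex hull
of the hypograph of `f_δ`: a countable split is approximated by its truncations, which are finite
convex combinations, and every finite convex combination is a split. Hence `v_δ = Cav f_δ` is
concave and, being nonnegative, lower semicontinuous on the simplex. The concave hull of a bounded
upper semicontinuous function is upper semicontinuous, because the convex hull of a compact set in
finite dimension is compact; so value iteration from `0` yields upper semicontinuous functions
converging uniformly to `v_δ` at rate `δ ^ m`, and `v_δ` is upper semicontinuous as well.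
-/

open Set Filter Topology
open scoped Pointwise

theorem isCompact_convexHull {E : Type*} [NormedAddCommGroup E] [NormedSpace ℝ E]
    [FiniteDimensional ℝ E] {s : Set E} (hs : IsCompact s) : IsCompact (convexHull ℝ s) := by
  classical
  -- Carathéodory: every point of the hull is a combination of at most `finrank + 1` points of `s`
  let F : ℕ → Set E := fun m =>
    (fun wz : (Fin m → ℝ) × (Fin m → E) => ∑ i, wz.1 i • wz.2 i) ''
      (stdSimplex ℝ (Fin m) ×ˢ univ.pi fun _ => s)
  have hF : ∀ m, IsCompact (F m) := fun m =>
    ((isCompact_stdSimplex ℝ (Fin m)).prod (isCompact_univ_pi fun _ => hs)).image <|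
      continuous_finsetSum _ fun i _ =>
        ((continuous_apply i).comp continuous_fst).smul ((continuous_apply i).comp continuous_snd)
  suffices convexHull ℝ s = ⋃ m ∈ Finset.range (Module.finrank ℝ E + 2), F m by
    rw [this]
    exact (Finset.range _).isCompact_biUnion fun m _ => hF m
  refine Subset.antisymm (fun x hx => ?_) (iUnion₂_subset fun m _ => ?_)
  · obtain ⟨ι, _, z, w, hzs, hind, hw0, hw1, rfl⟩ := eq_pos_convex_span_of_mem_convexHull hx
    have hcard : Fintype.card ι < Module.finrank ℝ E + 2 :=
      Nat.lt_succ_of_le (hind.card_le_finrank_succ.trans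
        (Nat.succ_le_succ (Submodule.finrank_le _)))
    let e := (Fintype.equivFin ι).symm
    refine mem_biUnion (Finset.mem_range.2 hcard)
      ⟨(w ∘ e, z ∘ e), ⟨⟨fun _ => (hw0 _).le, ?_⟩, fun _ _ => hzs (mem_range_self _)⟩, ?_⟩
    · simpa only [Function.comp] using (e.sum_comp w).trans hw1
    · exact e.sum_comp fun i => w i • z i
  · rintro _ ⟨⟨w, z⟩, ⟨hw, hz⟩, rfl⟩
    exact (convex_convexHull ℝ s).sum_mem (fun i _ => hw.1 i) hw.2
      fun i _ => subset_convexHull ℝ s (hz i (mem_univ i))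

theorem Convex.sum_range_add_smul_mem {E : Type*} [AddCommGroup E] [Module ℝ E] {S : Set E}
    (hS : Convex ℝ S) {n : ℕ} {w : ℕ → ℝ} {P : ℕ → E} {Q : E} (hw0 : ∀ i < n, 0 ≤ w i)
    (hw1 : ∑ i ∈ Finset.range n, w i ≤ 1) (hP : ∀ i < n, P i ∈ S) (hQ : Q ∈ S) :
    ∑ i ∈ Finset.range n, w i • P i + (1 - ∑ i ∈ Finset.range n, w i) • Q ∈ S := by
  let w' : ℕ → ℝ := fun i => if i < n then w i else 1 - ∑ i ∈ Finset.range n, w i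
  let P' : ℕ → E := fun i => if i < n then P i else Q
  have hw : ∑ i ∈ Finset.range n, w' i = ∑ i ∈ Finset.range n, w i :=
    Finset.sum_congr rfl fun i hi => by simp [w', Finset.mem_range.1 hi]
  have hwP : ∑ i ∈ Finset.range n, w' i • P' i = ∑ i ∈ Finset.range n, w i • P i :=
    Finset.sum_congr rfl fun i hi => by simp [w', P', Finset.mem_range.1 hi]
  have := hS.sum_mem (t := Finset.range (n + 1)) (w := w') (z := P')
    (fun i _ => by by_cases hi : i < n <;> simp [w', hi, hw0, hw1])
    (by rw [Finset.sum_range_succ, hw]; simp [w'])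
    (fun i _ => by by_cases hi : i < n <;> simp [P', hi, hP, hQ])
  rw [Finset.sum_range_succ, hwP] at this
  simpa [w', P'] using this

section Simplex

variable {K : Type*} [Fintype K]

theorem exists_mem_stdSimplex_eq_sum_smul [Nonempty K] {x : K → ℝ} (hx : 0 ≤ x) :
    ∃ ζ ∈ stdSimplex ℝ K, x = (∑ i, x i) • ζ := by
  classical
  by_cases h : ∑ i, x i = 0
  · refine ⟨Pi.single (Classical.arbitrary K) 1, single_mem_stdSimplex ℝ _, ?_⟩
    rw [h, zero_smul]
    funext i
    exact (Finset.sum_eq_zero_iff_of_nonneg fun i _ => hx i).1 h i (Finset.mem_univ i)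
  · refine ⟨(∑ i, x i)⁻¹ • x, ⟨fun i => ?_, ?_⟩, ?_⟩
    · exact smul_nonneg (inv_nonneg.2 (Finset.sum_nonneg fun i _ => hx i)) (hx i)
    · simp [← Finset.mul_sum, inv_mul_cancel₀ h]
    · rw [smul_smul, mul_inv_cancel₀ h, one_smul]

theorem IsStochastic.vecMul_mem_stdSimplex {M : Matrix K K ℝ} (hM : IsStochastic M) {p : K → ℝ}
    (hp : p ∈ stdSimplex ℝ K) : Matrix.vecMul p M ∈ stdSimplex ℝ K := by
  refine ⟨fun j => Finset.sum_nonneg fun i _ => mul_nonneg (hp.1 i) (hM.1 i j), ?_⟩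
  simp only [Matrix.vecMul, dotProduct]
  rw [Finset.sum_comm]
  simp [← Finset.mul_sum, hM.2, hp.2]

theorem nonempty_of_mem_stdSimplex {p : K → ℝ} (hp : p ∈ stdSimplex ℝ K) : Nonempty K :=
  Finset.univ_nonempty_iff.1 (Finset.nonempty_of_sum_ne_zero (hp.2 ▸ one_ne_zero))

theorem ConcaveOn.lowerSemicontinuousOn_stdSimplex {f : (K → ℝ) → ℝ}
    (hf : ConcaveOn ℝ (stdSimplex ℝ K) f) (hf0 : ∀ p ∈ stdSimplex ℝ K, 0 ≤ f p) :
    LowerSemicontinuousOn f (stdSimplex ℝ K) := by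
  intro ξ hξ y hy
  rcases lt_or_ge y 0 with hy0 | hy0
  · filter_upwards [self_mem_nhdsWithin] with η hη using hy0.trans_le (hf0 η hη)
  have hfξ : 0 < f ξ := hy0.trans_lt hy
  obtain ⟨t, hyt, ht1⟩ := exists_between ((div_lt_one hfξ).2 hy)
  have ht0 : 0 ≤ t := (div_nonneg hy0 hfξ.le).trans hyt.le
  -- near `ξ` every belief dominates `t • ξ`, hence is `t • ξ + (1 - t) • ζ` with `ζ ∈ Δ(K)`
  have hdom : ∀ᶠ η in 𝓝[stdSimplex ℝ K] ξ, ∀ ℓ, t * ξ ℓ ≤ η ℓ := by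
    refine eventually_all.2 fun ℓ => ?_
    rcases (hξ.1 ℓ).eq_or_lt with h0 | hpos
    · filter_upwards [self_mem_nhdsWithin] with η hη
      rw [← h0, mul_zero]
      exact hη.1 ℓ
    · have : t * ξ ℓ < ξ ℓ := mul_lt_of_lt_one_left hpos ht1
      exact nhdsWithin_le_nhds <|
        ((continuous_apply ℓ).tendsto ξ).eventually (lt_mem_nhds this) |>.mono fun η => le_of_lt
  filter_upwards [hdom, self_mem_nhdsWithin] with η hηξ hη
  have := nonempty_of_mem_stdSimplex hξ
  obtain ⟨ζ, hζ, hζη⟩ := exists_mem_stdSimplex_eq_sum_smul (x := η - t • ξ)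
    fun ℓ => by simpa using hηξ ℓ
  have hsum : ∑ ℓ, (η - t • ξ) ℓ = 1 - t := by
    simp [Finset.sum_sub_distrib, ← Finset.mul_sum, hη.2, hξ.2]
  have hηeq : t • ξ + (1 - t) • ζ = η := by rw [← hsum, ← hζη]; abel
  calc y < t * f ξ := (div_lt_iff₀ hfξ).1 hyt
    _ ≤ t • f ξ + (1 - t) • f ζ := by
        simpa using mul_nonneg (sub_nonneg.2 ht1.le) (hf0 ζ hζ)
    _ ≤ f η := hηeq ▸ hf.2 hξ hζ ht0 (sub_nonneg.2 ht1.le) (by ring)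

end Simplex

namespace IsSplit

variable {K : Type*} [Fintype K] {ξ : K → ℝ} {α : ℕ → ℝ} {ξs : ℕ → K → ℝ}

theorem summable (hs : IsSplit ξ α ξs) : Summable α := by
  by_contra h
  simpa [tsum_eq_zero_of_not_summable h] using hs.2.2.1

theorem summable_mul {g : (K → ℝ) → ℝ} {B : ℝ} (hs : IsSplit ξ α ξs)
    (hg : ∀ p ∈ stdSimplex ℝ K, g p ∈ Icc 0 B) : Summable fun s => α s * g (ξs s) :=
  hs.summable.mul_right B |>.of_nonneg_of_le
    (fun s => mul_nonneg (hs.1 s) (hg _ (hs.2.1 s)).1)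
    (fun s => mul_le_mul_of_nonneg_left (hg _ (hs.2.1 s)).2 (hs.1 s))

theorem sum_range_le_one (hs : IsSplit ξ α ξs) (n : ℕ) : ∑ i ∈ Finset.range n, α i ≤ 1 :=
  hs.2.2.1 ▸ hs.summable.sum_le_tsum _ fun i _ => hs.1 i

theorem exists_eq_sum_range_add_smul (hs : IsSplit ξ α ξs) (hξ : ξ ∈ stdSimplex ℝ K) (n : ℕ) :
    ∃ ζ ∈ stdSimplex ℝ K,
      ξ = ∑ i ∈ Finset.range n, α i • ξs i + (1 - ∑ i ∈ Finset.range n, α i) • ζ := by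
  have := nonempty_of_mem_stdSimplex hξ
  set ρ := ξ - ∑ i ∈ Finset.range n, α i • ξs i
  have hρ : 0 ≤ ρ := fun ℓ => by
    have hℓ := hs.summable_mul (g := fun p => p ℓ) fun p hp => mem_Icc_of_mem_stdSimplex hp ℓ
    simpa [ρ, ← hs.2.2.2 ℓ] using
      hℓ.sum_le_tsum (Finset.range n) fun i _ => mul_nonneg (hs.1 i) ((hs.2.1 i).1 ℓ)
  have hρsum : ∑ ℓ, ρ ℓ = 1 - ∑ i ∈ Finset.range n, α i := by
    simp only [ρ, Pi.sub_apply, Finset.sum_apply, Pi.smul_apply, smul_eq_mul,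
      Finset.sum_sub_distrib, hξ.2]
    rw [Finset.sum_comm]
    simp [← Finset.mul_sum, (hs.2.1 _).2]
  obtain ⟨ζ, hζ, hρζ⟩ := exists_mem_stdSimplex_eq_sum_smul hρ
  exact ⟨ζ, hζ, by rw [← hρsum, ← hρζ, add_sub_cancel]⟩

end IsSplit

theorem exists_isSplit_sum_smul {K ι : Type*} [Fintype K] [Fintype ι] {w : ι → ℝ}
    {z : ι → K → ℝ} (hw0 : ∀ i, 0 ≤ w i) (hw1 : ∑ i, w i = 1)
    (hz : ∀ i, z i ∈ stdSimplex ℝ K) (g : (K → ℝ) → ℝ) :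
    ∃ α ξs, IsSplit (∑ i, w i • z i) α ξs ∧ ∑' s, α s * g (ξs s) = ∑ i, w i * g (z i) := by
  obtain ⟨e, he⟩ := exists_injective_nat ι
  set ξ := ∑ i, w i • z i
  have hξ : ξ ∈ stdSimplex ℝ K :=
    (convex_stdSimplex ℝ K).sum_mem (fun i _ => hw0 i) hw1 fun i _ => hz i
  -- the atoms `z i` are placed at the indices `e i`; the other indices carry weight zero
  let α := Function.extend e w 0
  let ξs := Function.extend e z fun _ => ξ
  have htsum (F : ℝ → (K → ℝ) → ℝ) (hF : ∀ p, F 0 p = 0) :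
      ∑' s, F (α s) (ξs s) = ∑ i, F (w i) (z i) := by
    rw [← tsum_fintype (L := SummationFilter.unconditional ι), ← tsum_extend_zero he]
    congr 1
    funext s
    by_cases hs : ∃ i, e i = s
    · obtain ⟨i, rfl⟩ := hs
      simp [α, ξs, he.extend_apply]
    · simp [α, ξs, Function.extend_apply' _ _ _ hs, hF]
  have hcases : ∀ s, 0 ≤ α s ∧ ξs s ∈ stdSimplex ℝ K := fun s => by
    by_cases hs : ∃ i, e i = s
    · obtain ⟨i, rfl⟩ := hs
      simp [α, ξs, he.extend_apply, hw0 i, hz i]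
    · simp [α, ξs, Function.extend_apply' _ _ _ hs, hξ]
  refine ⟨α, ξs, ⟨fun s => (hcases s).1, fun s => (hcases s).2, ?_, fun ℓ => ?_⟩,
    htsum (fun a p => a * g p) fun p => zero_mul _⟩
  · rw [htsum (fun a _ => a) fun _ => rfl, hw1]
  · rw [htsum (fun a p => a * p ℓ) fun p => zero_mul _]
    simp [ξ, Finset.sum_apply]

section UpperHull

variable {K : Type*} [Fintype K]

/-- Cut off below at height `0`, so that it is compact when `g` is bounded and upper
semicontinuous. -/
def simplexHypograph (g : (K → ℝ) → ℝ) : Set ((K → ℝ) × ℝ) :=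
  {q | q.1 ∈ stdSimplex ℝ K ∧ q.2 ≤ g q.1} ∩ {q | 0 ≤ q.2}

def upperHull (g : (K → ℝ) → ℝ) (ξ : K → ℝ) : ℝ :=
  sSup {t | (ξ, t) ∈ convexHull ℝ (simplexHypograph g)}

variable {g : (K → ℝ) → ℝ} {B : ℝ} {ξ : K → ℝ}

theorem convexHull_simplexHypograph_subset (hg : ∀ p ∈ stdSimplex ℝ K, g p ≤ B) :
    convexHull ℝ (simplexHypograph g) ⊆ stdSimplex ℝ K ×ˢ Icc 0 B :=
  convexHull_min (fun _ hq => ⟨hq.1.1, hq.2, hq.1.2.trans (hg _ hq.1.1)⟩)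
    ((convex_stdSimplex ℝ K).prod (convex_Icc 0 B))

theorem mk_zero_mem_convexHull_simplexHypograph (hg : ∀ p ∈ stdSimplex ℝ K, 0 ≤ g p)
    (hξ : ξ ∈ stdSimplex ℝ K) : (ξ, 0) ∈ convexHull ℝ (simplexHypograph g) :=
  subset_convexHull ℝ _ ⟨⟨hξ, hg ξ hξ⟩, le_refl (0 : ℝ)⟩

theorem le_upperHull (hg : ∀ p ∈ stdSimplex ℝ K, g p ≤ B) {t : ℝ}
    (ht : (ξ, t) ∈ convexHull ℝ (simplexHypograph g)) : t ≤ upperHull g ξ :=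
  le_csSup ⟨B, fun _ ht' => (convexHull_simplexHypograph_subset hg ht').2.2⟩ ht

theorem le_upperHull_self (hg : ∀ p ∈ stdSimplex ℝ K, g p ∈ Icc 0 B)
    (hξ : ξ ∈ stdSimplex ℝ K) : g ξ ≤ upperHull g ξ :=
  le_upperHull (fun p hp => (hg p hp).2) (subset_convexHull ℝ _ ⟨⟨hξ, le_rfl⟩, (hg ξ hξ).1⟩)

theorem upperHull_le_of_concaveOn (hg : ∀ p ∈ stdSimplex ℝ K, 0 ≤ g p)
    (hξ : ξ ∈ stdSimplex ℝ K) {h : (K → ℝ) → ℝ} (hh : ConcaveOn ℝ (stdSimplex ℝ K) h)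
    (hgh : ∀ p ∈ stdSimplex ℝ K, g p ≤ h p) : upperHull g ξ ≤ h ξ :=
  csSup_le ⟨0, mk_zero_mem_convexHull_simplexHypograph hg hξ⟩ fun _ ht =>
    (convexHull_min (t := {q | q.1 ∈ stdSimplex ℝ K ∧ q.2 ≤ h q.1})
      (fun _ hq => ⟨hq.1.1, hq.1.2.trans (hgh _ hq.1.1)⟩) hh.convex_hypograph ht).2

theorem upperHull_mem_Icc (hg : ∀ p ∈ stdSimplex ℝ K, g p ∈ Icc 0 B)
    (hξ : ξ ∈ stdSimplex ℝ K) : upperHull g ξ ∈ Icc 0 B :=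
  ⟨(hg ξ hξ).1.trans (le_upperHull_self hg hξ),
    csSup_le ⟨0, mk_zero_mem_convexHull_simplexHypograph (fun p hp => (hg p hp).1) hξ⟩
      fun _ ht => (convexHull_simplexHypograph_subset (fun p hp => (hg p hp).2) ht).2.2⟩

theorem concaveOn_upperHull (hg : ∀ p ∈ stdSimplex ℝ K, g p ∈ Icc 0 B) :
    ConcaveOn ℝ (stdSimplex ℝ K) (upperHull g) := by
  refine ⟨convex_stdSimplex ℝ K, fun x hx y hy a b ha hb hab => ?_⟩
  let S : (K → ℝ) → Set ℝ := fun ξ => {t | (ξ, t) ∈ convexHull ℝ (simplexHypograph g)}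
  have hne : ∀ ξ ∈ stdSimplex ℝ K, (S ξ).Nonempty := fun ξ hξ =>
    ⟨0, mk_zero_mem_convexHull_simplexHypograph (fun p hp => (hg p hp).1) hξ⟩
  have hbdd : ∀ ξ, BddAbove (S ξ) := fun ξ =>
    ⟨B, fun _ ht => (convexHull_simplexHypograph_subset (fun p hp => (hg p hp).2) ht).2.2⟩
  have hsub : a • S x + b • S y ⊆ S (a • x + b • y) := by
    rintro _ ⟨_, ⟨t₁, ht₁, rfl⟩, _, ⟨t₂, ht₂, rfl⟩, rfl⟩
    have := (convex_convexHull ℝ _) ht₁ ht₂ ha hb hab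
    simp only [Prod.smul_mk, Prod.mk_add_mk, smul_eq_mul] at this
    exact this
  calc a • upperHull g x + b • upperHull g y = sSup (a • S x + b • S y) := by
        rw [csSup_add ((hne x hx).smul_set) ((hbdd x).smul_of_nonneg ha) ((hne y hy).smul_set)
          ((hbdd y).smul_of_nonneg hb), Real.sSup_smul_of_nonneg ha,
          Real.sSup_smul_of_nonneg hb]
        rfl
    _ ≤ upperHull g (a • x + b • y) :=
        csSup_le_csSup (hbdd _) (((hne x hx).smul_set).add (hne y hy).smul_set) hsub

theorem cav_eq_upperHull (hg : ∀ p ∈ stdSimplex ℝ K, g p ∈ Icc 0 B)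
    (hξ : ξ ∈ stdSimplex ℝ K) : cav g ξ = upperHull g ξ := by
  have hmem : upperHull g ξ ∈ {y | ∃ h : (K → ℝ) → ℝ, ConcaveOn ℝ (stdSimplex ℝ K) h ∧
      (∀ p ∈ stdSimplex ℝ K, g p ≤ h p) ∧ y = h ξ} :=
    ⟨_, concaveOn_upperHull hg, fun p hp => le_upperHull_self hg hp, rfl⟩
  refine le_antisymm (csInf_le ⟨g ξ, ?_⟩ hmem) (le_csInf ⟨_, hmem⟩ ?_)
  · rintro _ ⟨h, -, hgh, rfl⟩
    exact hgh ξ hξ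
  · rintro _ ⟨h, hh, hgh, rfl⟩
    exact upperHull_le_of_concaveOn (fun p hp => (hg p hp).1) hξ hh hgh

theorem upperHull_le_add_of_le_add {g' : (K → ℝ) → ℝ} {ε : ℝ}
    (hg : ∀ p ∈ stdSimplex ℝ K, 0 ≤ g p) (hg' : ∀ p ∈ stdSimplex ℝ K, g' p ∈ Icc 0 B)
    (hgg' : ∀ p ∈ stdSimplex ℝ K, g p ≤ g' p + ε) (hξ : ξ ∈ stdSimplex ℝ K) :
    upperHull g ξ ≤ upperHull g' ξ + ε :=
  upperHull_le_of_concaveOn hg hξ ((concaveOn_upperHull hg').add_const ε)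
    fun p hp => (hgg' p hp).trans (add_le_add_left (le_upperHull_self hg' hp) ε)

theorem abs_upperHull_sub_le {g' : (K → ℝ) → ℝ} {ε : ℝ}
    (hg : ∀ p ∈ stdSimplex ℝ K, g p ∈ Icc 0 B) (hg' : ∀ p ∈ stdSimplex ℝ K, g' p ∈ Icc 0 B)
    (hgg' : ∀ p ∈ stdSimplex ℝ K, |g p - g' p| ≤ ε) (hξ : ξ ∈ stdSimplex ℝ K) :
    |upperHull g ξ - upperHull g' ξ| ≤ ε := by
  refine abs_sub_le_iff.2 ⟨?_, ?_⟩
  · have := upperHull_le_add_of_le_add (fun p hp => (hg p hp).1) hg'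
      (fun p hp => by linarith [(abs_sub_le_iff.1 (hgg' p hp)).1]) hξ
    linarith
  · have := upperHull_le_add_of_le_add (fun p hp => (hg' p hp).1) hg
      (fun p hp => by linarith [(abs_sub_le_iff.1 (hgg' p hp)).2]) hξ
    linarith

namespace IsSplit

variable {α : ℕ → ℝ} {ξs : ℕ → K → ℝ}

theorem tsum_le_upperHull (hs : IsSplit ξ α ξs) (hξ : ξ ∈ stdSimplex ℝ K)
    (hg : ∀ p ∈ stdSimplex ℝ K, g p ∈ Icc 0 B) : ∑' s, α s * g (ξs s) ≤ upperHull g ξ := by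
  refine le_of_tendsto' (hs.summable_mul hg).hasSum.tendsto_sum_nat fun n =>
    le_upperHull (fun p hp => (hg p hp).2) ?_
  obtain ⟨ζ, hζ, hξζ⟩ := hs.exists_eq_sum_range_add_smul hξ n
  have hmem := (convex_convexHull ℝ (simplexHypograph g)).sum_range_add_smul_mem
    (P := fun i => (ξs i, g (ξs i))) (fun i _ => hs.1 i) (hs.sum_range_le_one n)
    (fun i _ => subset_convexHull ℝ _ ⟨⟨hs.2.1 i, le_rfl⟩, (hg _ (hs.2.1 i)).1⟩)
    (mk_zero_mem_convexHull_simplexHypograph (fun p hp => (hg p hp).1) hζ)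
  convert hmem using 1
  ext
  · simp [hξζ, Prod.fst_sum]
  · simp [Prod.snd_sum]

end IsSplit

theorem sSup_tsum_split_eq_upperHull (hg : ∀ p ∈ stdSimplex ℝ K, g p ∈ Icc 0 B)
    (hξ : ξ ∈ stdSimplex ℝ K) :
    sSup {r | ∃ α ξs, IsSplit ξ α ξs ∧ r = ∑' s, α s * g (ξs s)} = upperHull g ξ := by
  have hle : ∀ r ∈ {r | ∃ α ξs, IsSplit ξ α ξs ∧ r = ∑' s, α s * g (ξs s)},
      r ≤ upperHull g ξ := by
    rintro _ ⟨α, ξs, hs, rfl⟩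
    exact hs.tsum_le_upperHull hξ hg
  refine le_antisymm (csSup_le ?_ hle) (csSup_le ⟨0,
    mk_zero_mem_convexHull_simplexHypograph (fun p hp => (hg p hp).1) hξ⟩ fun t ht => ?_)
  · obtain ⟨α, ξs, hs, hpay⟩ := exists_isSplit_sum_smul (w := fun _ : Unit => 1)
      (fun _ => zero_le_one) (by simp) (fun _ => hξ) g
    exact ⟨_, α, ξs, by simpa using hs, rfl⟩
  obtain ⟨ι, _, w, z, hw0, hw1, hz, hwz⟩ := mem_convexHull_iff_exists_fintype.1 ht
  obtain ⟨α, ξs, hs, hpay⟩ :=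
    exists_isSplit_sum_smul hw0 hw1 (fun i => (hz i).1.1) g
  have hfst : ∑ i, w i • (z i).1 = ξ := by simpa [Prod.fst_sum] using congrArg Prod.fst hwz
  have hsnd : ∑ i, w i * (z i).2 = t := by simpa [Prod.snd_sum] using congrArg Prod.snd hwz
  calc t = ∑ i, w i * (z i).2 := hsnd.symm
    _ ≤ ∑ i, w i * g (z i).1 :=
        Finset.sum_le_sum fun i _ => mul_le_mul_of_nonneg_left (hz i).1.2 (hw0 i)
    _ ≤ _ := le_csSup ⟨_, hle⟩ ⟨α, ξs, hfst ▸ hs, hpay.symm⟩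

theorem upperSemicontinuousOn_upperHull (hgu : UpperSemicontinuousOn g (stdSimplex ℝ K))
    (hg : ∀ p ∈ stdSimplex ℝ K, g p ∈ Icc 0 B) :
    UpperSemicontinuousOn (upperHull g) (stdSimplex ℝ K) := by
  have hH : IsCompact (convexHull ℝ (simplexHypograph g)) :=
    isCompact_convexHull <| ((isCompact_stdSimplex ℝ K).prod isCompact_Icc).of_isClosed_subset
      (((upperSemicontinuousOn_iff_isClosed_hypograph (isClosed_stdSimplex ℝ K)).1 hgu).inter
        (isClosed_le continuous_const continuous_snd))
      fun q hq => ⟨hq.1.1, hq.2, hq.1.2.trans (hg _ hq.1.1).2⟩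
  intro ξ hξ y hy
  obtain ⟨y', hξy', hy'y⟩ := exists_between hy
  -- the beliefs over which the hull reaches height `y'` form a closed set avoiding `ξ`
  have hclosed : IsClosed (Prod.fst '' (convexHull ℝ (simplexHypograph g) ∩ {q | y' ≤ q.2})) :=
    ((hH.inter_right (isClosed_le continuous_const continuous_snd)).image continuous_fst).isClosed
  have hξout : ξ ∉ Prod.fst '' (convexHull ℝ (simplexHypograph g) ∩ {q | y' ≤ q.2}) := by
    rintro ⟨⟨_, t⟩, ⟨ht, hy't⟩, rfl⟩
    exact (hy't.trans (le_upperHull (fun p hp => (hg p hp).2) ht)).not_gt hξy'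
  filter_upwards [mem_nhdsWithin_of_mem_nhds (hclosed.isOpen_compl.mem_nhds hξout),
    self_mem_nhdsWithin] with η hηout hη
  refine lt_of_le_of_lt (csSup_le ⟨0,
    mk_zero_mem_convexHull_simplexHypograph (fun p hp => (hg p hp).1) hη⟩ fun t ht => ?_) hy'y
  exact le_of_not_ge fun hy't => hηout ⟨(η, t), ⟨ht, hy't⟩, rfl⟩

end UpperHull

theorem upperSemicontinuousOn_of_forall_exists_abs_sub_le {X : Type*} [TopologicalSpace X]
    {s : Set X} {f : X → ℝ}
    (h : ∀ ε > 0, ∃ g : X → ℝ, UpperSemicontinuousOn g s ∧ ∀ x ∈ s, |g x - f x| ≤ ε) :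
    UpperSemicontinuousOn f s := by
  intro x hx y hy
  obtain ⟨g, hg, hgf⟩ := h ((y - f x) / 3) (by linarith)
  filter_upwards [hg x hx (y - (y - f x) / 3) (by linarith [(abs_le.1 (hgf x hx)).2]),
    self_mem_nhdsWithin] with z hz hzs
  linarith [(abs_le.1 (hgf z hzs)).1]

section Discounted

variable {K : Type*} [Fintype K] {M : Matrix K K ℝ} {u : (K → ℝ) → ℝ} {δ C : ℝ}

/-- `discountedPayoff M u δ (v δ)` is the paper's `f_δ`. -/
def discountedPayoff (M : Matrix K K ℝ) (u : (K → ℝ) → ℝ) (δ : ℝ) (W : (K → ℝ) → ℝ)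
    (p : K → ℝ) : ℝ :=
  (1 - δ) * u p + δ * W (Matrix.vecMul p M)

theorem discountedPayoff_mem_Icc (hM : IsStochastic M) (hδ : δ ∈ Icc 0 1)
    (hu : ∀ p ∈ stdSimplex ℝ K, u p ∈ Icc 0 C) {W : (K → ℝ) → ℝ}
    (hW : ∀ p ∈ stdSimplex ℝ K, W p ∈ Icc 0 C) {p : K → ℝ} (hp : p ∈ stdSimplex ℝ K) :
    discountedPayoff M u δ W p ∈ Icc 0 C := by
  obtain ⟨hu0, huC⟩ := hu p hp
  obtain ⟨hW0, hWC⟩ := hW _ (hM.vecMul_mem_stdSimplex hp)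
  obtain ⟨hδ0, hδ1⟩ := hδ
  constructor <;> unfold discountedPayoff <;> nlinarith

theorem upperSemicontinuousOn_discountedPayoff (hM : IsStochastic M) (hδ : δ ∈ Icc 0 1)
    (hu : UpperSemicontinuousOn u (stdSimplex ℝ K)) {W : (K → ℝ) → ℝ}
    (hW : UpperSemicontinuousOn W (stdSimplex ℝ K)) :
    UpperSemicontinuousOn (discountedPayoff M u δ W) (stdSimplex ℝ K) := by
  have hWM : UpperSemicontinuousOn (fun p => W (Matrix.vecMul p M)) (stdSimplex ℝ K) :=
    hW.comp (Continuous.matrix_vecMul continuous_id continuous_const).continuousOn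
      fun _ hp => hM.vecMul_mem_stdSimplex hp
  exact ((continuous_const_mul _).comp_upperSemicontinuousOn hu
      (monotone_mul_left_of_nonneg (sub_nonneg.2 hδ.2))).add
    ((continuous_const_mul _).comp_upperSemicontinuousOn hWM (monotone_mul_left_of_nonneg hδ.1))

theorem abs_discountedPayoff_sub_le (hM : IsStochastic M) (hδ : 0 ≤ δ) {W W' : (K → ℝ) → ℝ}
    {ε : ℝ} (hWW' : ∀ p ∈ stdSimplex ℝ K, |W p - W' p| ≤ ε) {p : K → ℝ}
    (hp : p ∈ stdSimplex ℝ K) :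
    |discountedPayoff M u δ W p - discountedPayoff M u δ W' p| ≤ δ * ε := by
  rw [discountedPayoff, discountedPayoff, add_sub_add_left_eq_sub, ← mul_sub, abs_mul,
    abs_of_nonneg hδ]
  exact mul_le_mul_of_nonneg_left (hWW' _ (hM.vecMul_mem_stdSimplex hp)) hδ

/-- Witnessed by value iteration from `0`. -/
theorem exists_upperSemicontinuousOn_abs_sub_le_pow (hM : IsStochastic M) (hδ : δ ∈ Icc 0 1)
    (huu : UpperSemicontinuousOn u (stdSimplex ℝ K)) (hu : ∀ p ∈ stdSimplex ℝ K, u p ∈ Icc 0 C)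
    {v : (K → ℝ) → ℝ} (hv : ∀ p ∈ stdSimplex ℝ K, v p ∈ Icc 0 C)
    (hfix : ∀ ξ ∈ stdSimplex ℝ K, v ξ = upperHull (discountedPayoff M u δ v) ξ) (m : ℕ) :
    ∃ W : (K → ℝ) → ℝ, UpperSemicontinuousOn W (stdSimplex ℝ K) ∧
      (∀ p ∈ stdSimplex ℝ K, W p ∈ Icc 0 C) ∧ ∀ p ∈ stdSimplex ℝ K, |W p - v p| ≤ δ ^ m * C := by
  induction m with
  | zero =>
    refine ⟨0, upperSemicontinuousOn_const, fun p hp => ⟨le_rfl, (hv p hp).1.trans (hv p hp).2⟩,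
      fun p hp => ?_⟩
    simpa [abs_of_nonneg (hv p hp).1] using (hv p hp).2
  | succ m ih =>
    obtain ⟨W, hWu, hW, hWv⟩ := ih
    have hg := fun p hp => discountedPayoff_mem_Icc hM hδ hu hW (p := p) hp
    refine ⟨upperHull (discountedPayoff M u δ W),
      upperSemicontinuousOn_upperHull (upperSemicontinuousOn_discountedPayoff hM hδ huu hWu) hg,
      fun p hp => upperHull_mem_Icc hg hp, fun p hp => ?_⟩
    rw [hfix p hp, pow_succ', mul_assoc]
    exact abs_upperHull_sub_le hg (fun q hq => discountedPayoff_mem_Icc hM hδ hu hv hq)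
      (fun q hq => abs_discountedPayoff_sub_le hM hδ.1 hWv hq) hp

theorem upperSemicontinuousOn_of_eq_upperHull_discountedPayoff (hM : IsStochastic M)
    (hδ : δ ∈ Ico 0 1) (huu : UpperSemicontinuousOn u (stdSimplex ℝ K))
    (hu : ∀ p ∈ stdSimplex ℝ K, u p ∈ Icc 0 C) {v : (K → ℝ) → ℝ}
    (hv : ∀ p ∈ stdSimplex ℝ K, v p ∈ Icc 0 C)
    (hfix : ∀ ξ ∈ stdSimplex ℝ K, v ξ = upperHull (discountedPayoff M u δ v) ξ) :
    UpperSemicontinuousOn v (stdSimplex ℝ K) := by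
  refine upperSemicontinuousOn_of_forall_exists_abs_sub_le fun ε hε => ?_
  have hlim : Tendsto (fun m => δ ^ m * C) atTop (𝓝 0) := by
    simpa using (tendsto_pow_atTop_nhds_zero_of_lt_one hδ.1 hδ.2).mul_const C
  obtain ⟨m, hm⟩ := (hlim.eventually (gt_mem_nhds hε)).exists
  obtain ⟨W, hWu, -, hWv⟩ :=
    exists_upperSemicontinuousOn_abs_sub_le_pow hM (Ico_subset_Icc_self hδ) huu hu hv hfix m
  exact ⟨W, hWu, fun p hp => (hWv p hp).trans hm.le⟩

end Discounted

theorem markovian_persuasion_value_eq_cav_and_concave_general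
    {K : Type*} [Fintype K]
    (M : Matrix K K ℝ) (hM : IsStochastic M)
    (u : (K → ℝ) → ℝ) (hu0 : ∀ ξ ∈ stdSimplex ℝ K, 0 ≤ u ξ)
    (husc : UpperSemicontinuousOn u (stdSimplex ℝ K))
    (C : ℝ) (hC : IsLUB (u '' stdSimplex ℝ K) C)
    (v : ℝ → (K → ℝ) → ℝ) (hv : IsValueFamily M u C v) :
    ∀ δ : ℝ, 0 ≤ δ → δ < 1 →
      (∀ ξ ∈ stdSimplex ℝ K,
        v δ ξ = cav (fun p => (1 - δ) * u p + δ * v δ (Matrix.vecMul p M)) ξ) ∧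
      ConcaveOn ℝ (stdSimplex ℝ K) (v δ) ∧
      ContinuousOn (v δ) (stdSimplex ℝ K) := by
  intro δ hδ0 hδ1
  obtain ⟨hvC, hbellman⟩ := hv δ ⟨hδ0, hδ1⟩
  have hu : ∀ p ∈ stdSimplex ℝ K, u p ∈ Icc 0 C := fun p hp => ⟨hu0 p hp, hC.1 ⟨p, hp, rfl⟩⟩
  have hf := fun p hp => discountedPayoff_mem_Icc hM ⟨hδ0, hδ1.le⟩ hu hvC (p := p) hp
  have hfix : ∀ ξ ∈ stdSimplex ℝ K, v δ ξ = upperHull (discountedPayoff M u δ (v δ)) ξ :=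
    fun ξ hξ => (hbellman ξ hξ).trans (sSup_tsum_split_eq_upperHull hf hξ)
  have hconc : ConcaveOn ℝ (stdSimplex ℝ K) (v δ) :=
    (concaveOn_upperHull hf).congr fun ξ hξ => (hfix ξ hξ).symm
  refine ⟨fun ξ hξ => (hfix ξ hξ).trans (cav_eq_upperHull hf hξ).symm, hconc, ?_⟩
  exact continuousOn_iff_lower_upperSemicontinuousOn.2
    ⟨hconc.lowerSemicontinuousOn_stdSimplex fun p hp => (hvC p hp).1,
      upperSemicontinuousOn_of_eq_upperHull_discountedPayoff hM ⟨hδ0, hδ1⟩ husc hu hvC hfix⟩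

theorem markovian_persuasion_value_eq_cav_and_concave
    {K : Type*} [Fintype K] [Nonempty K]
    (M : Matrix K K ℝ) (hM : IsStochastic M)
    (u : (K → ℝ) → ℝ) (hu0 : ∀ ξ ∈ stdSimplex ℝ K, 0 ≤ u ξ)
    (husc : UpperSemicontinuousOn u (stdSimplex ℝ K))
    (C : ℝ) (hC : IsLUB (u '' stdSimplex ℝ K) C)
    (v : ℝ → (K → ℝ) → ℝ) (hv : IsValueFamily M u C v) :
    ∀ δ : ℝ, 0 ≤ δ → δ < 1 →
      (∀ ξ ∈ stdSimplex ℝ K,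
        v δ ξ = cav (fun p => (1 - δ) * u p + δ * v δ (Matrix.vecMul p M)) ξ) ∧
      ConcaveOn ℝ (stdSimplex ℝ K) (v δ) ∧
      ContinuousOn (v δ) (stdSimplex ℝ K) :=
  markovian_persuasion_value_eq_cav_and_concave_general M hM u hu0 husc C hC v hv
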